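/- For all a ∈ A with deg a < d, χ_t(a) = Σ_{j=0}^{d-1} b_j(t)·E_j(a) in A[t]. -/

import Mathlib

noncomputable section
open Polynomial

variable (Fq : Type) [Field Fq] [Fintype Fq]

/-- The polynomial `∑ i, c i * θ^i` determined by a tuple `c : Fin d → Fq`;
as `c` ranges over all tuples this enumerates `A(d)`. -/
def polyOf {d : ℕ} (c : Fin d → Fq) : Polynomial Fq :=
  ∑ i : Fin d, C (c i) * X ^ (i : ℕ)

/-- `D_d`, the product of all monic polynomials of degree `d` in `A = 𝔽_q[θ]`. -/
def Dmonic (d : ℕ) : Polynomial Fq :=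
  ∏ c : Fin d → Fq, (X ^ d + polyOf Fq c)

/-- The normalized Carlitz polynomial `E_d(z) = D_d⁻¹ ∏_{a ∈ A(d)} (z - a) ∈ K[z]`. -/
def Ecar (d : ℕ) : Polynomial (RatFunc Fq) :=
  C (algebraMap (Polynomial Fq) (RatFunc Fq) (Dmonic Fq d))⁻¹ *
    ∏ c : Fin d → Fq, (X - C (algebraMap (Polynomial Fq) (RatFunc Fq) (polyOf Fq c)))

/-- `b_j(t) = ∏_{i=0}^{j-1} (t - θ^{q^i}) ∈ K[t]`. -/
def bK (j : ℕ) : Polynomial (RatFunc Fq) :=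
  ∏ i ∈ Finset.range j,
    (X - C (algebraMap (Polynomial Fq) (RatFunc Fq) ((X : Polynomial Fq) ^ (Fintype.card Fq) ^ i)))

/-- `χ_t(a)`: the image of `a ∈ A` under the `𝔽_q`-algebra morphism `θ ↦ t`. -/
def chiK (a : Polynomial Fq) : Polynomial (RatFunc Fq) :=
  a.map (algebraMap Fq (RatFunc Fq))


/-!
The polynomial `e_d(z) = ∏_{a ∈ A(d)} (z - a) = D_d E_d(z)` is `𝔽_q`-linear in `z`: a polynomial
of degree `< q^d` vanishing on `A(d)` is zero, which gives additivity, and `λ^(q^d) = λ` for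
`λ ∈ 𝔽_q` gives homogeneity. The same degree argument gives Carlitz's recursion
`E_{j+1}(θz) = θ^(q^(j+1)) E_{j+1}(z) + E_j(z)`. Combined with `t b_j = b_{j+1} + θ^(q^j) b_j`, it
shows that `S(z) = ∑_{j ≤ d} b_j(t) E_j(z)` satisfies `t S(z) = S(θz) + b_{d+1}(t) E_d(z)`. As
`E_d(θ^i) = 0` for `i < d`, induction on `i` gives `S(θ^i) = t^i` for `i ≤ d`, and the theorem
follows by `𝔽_q`-linearity in `a`.
-/

theorem Polynomial.IsMonicOfDegree.natDegree_comp_C_mul_X_sub_lt {R : Type*} [CommRing R]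
    {p : R[X]} {n : ℕ} (hp : IsMonicOfDegree p n) (hn : n ≠ 0) (r : R) :
    (p.comp (C r * X) - C (r ^ n) * p).natDegree < n := by
  obtain ⟨p', rfl, hp'⟩ := hp.exists_natDegree_lt hn
  have hcancel : (X ^ n + p').comp (C r * X) - C (r ^ n) * (X ^ n + p') =
      p'.comp (C r * X) - C (r ^ n) * p' := by
    simp only [add_comp, X_pow_comp, mul_pow, C_pow]
    ring
  rw [hcancel]
  refine (natDegree_sub_le _ _).trans_lt (max_lt ?_ ((natDegree_C_mul_le _ _).trans_lt hp'))
  calc (p'.comp (C r * X)).natDegree ≤ p'.natDegree * (C r * X).natDegree := natDegree_comp_le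
    _ ≤ p'.natDegree * 1 := Nat.mul_le_mul_left _ ((natDegree_C_mul_le r X).trans natDegree_X_le)
    _ < n := by rwa [mul_one]

section VanishingPoly

variable {M L : Type*} [Fintype M] [Field L]

def vanishingPoly (f : M → L) : L[X] :=
  ∏ m, (X - C (f m))

theorem isMonicOfDegree_vanishingPoly (f : M → L) :
    IsMonicOfDegree (vanishingPoly f) (Fintype.card M) where
  natDegree_eq := by simp [vanishingPoly, natDegree_prod _ _ fun m _ ↦ X_sub_C_ne_zero (f m)]
  monic := monic_prod_of_monic _ _ fun m _ ↦ monic_X_sub_C (f m)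

theorem eval_vanishingPoly_apply (f : M → L) (m : M) : (vanishingPoly f).eval (f m) = 0 := by
  rw [vanishingPoly, eval_prod]
  exact Finset.prod_eq_zero (Finset.mem_univ m) (by simp)

theorem eval_add_apply_vanishingPoly [AddCommGroup M] (f : M →+ L) (x : L) (m : M) :
    (vanishingPoly f).eval (x + f m) = (vanishingPoly f).eval x := by
  simp only [vanishingPoly, eval_prod, eval_sub, eval_X, eval_C]
  exact Fintype.prod_equiv (Equiv.subRight m) _ _ fun n ↦ by
    rw [Equiv.subRight_apply, map_sub]; ring

theorem eval_vanishingPoly_add [AddCommGroup M] (f : M →+ L) (hf : Function.Injective f)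
    (x y : L) :
    (vanishingPoly f).eval (x + y) = (vanishingPoly f).eval x + (vanishingPoly f).eval y := by
  set P := vanishingPoly f
  -- `P(z + y) - P(z) - P(y)` has degree `< card M` and vanishes on the range of `f`.
  have hQ : P.comp (X + C y) - P - C (P.eval y) = 0 := by
    refine eq_zero_of_natDegree_lt_card_of_eval_eq_zero _ hf (fun m ↦ ?_) ?_
    · simp [P, add_comm (f m), eval_add_apply_vanishingPoly, eval_vanishingPoly_apply]
    · have hP := isMonicOfDegree_vanishingPoly f
      rw [natDegree_sub_C]
      refine IsMonicOfDegree.natDegree_sub_lt Fintype.card_ne_zero ?_ hP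
      simpa using hP.comp one_ne_zero (isMonicOfDegree_X_add_one y)
  have h := congrArg (eval x) hQ
  simp only [eval_sub, eval_comp, eval_add, eval_X, eval_C, eval_zero] at h
  linear_combination h

theorem eval_algebraMap_mul_vanishingPoly {F : Type*} [Field F] [Fintype F] [AddCommGroup M]
    [Module F M] [Algebra F L] (f : M →ₗ[F] L) (c : F) (x : L) :
    (vanishingPoly f).eval (algebraMap F L c * x) =
      algebraMap F L c * (vanishingPoly f).eval x := by
  rcases eq_or_ne c 0 with rfl | hc
  · simpa using eval_vanishingPoly_apply f 0
  simp only [vanishingPoly, eval_prod, eval_sub, eval_X, eval_C]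
  calc ∏ m, (algebraMap F L c * x - f m) = ∏ m, algebraMap F L c * (x - f (c⁻¹ • m)) :=
        Finset.prod_congr rfl fun m _ ↦ by
          rw [map_smul, Algebra.smul_def, mul_sub, ← mul_assoc, ← map_mul, mul_inv_cancel₀ hc,
            map_one, one_mul]
    _ = algebraMap F L c ^ Fintype.card M * ∏ m, (x - f (c⁻¹ • m)) := by
        rw [Finset.prod_mul_distrib, Finset.prod_const, Finset.card_univ]
    _ = algebraMap F L c * ∏ m, (x - f m) := by
        rw [Module.card_eq_pow_finrank (K := F), ← map_pow, FiniteField.pow_card_pow]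
        congr 1
        exact Fintype.prod_equiv (MulAction.toPerm (inv_ne_zero hc |>.isUnit.unit)) _ _
          fun m ↦ rfl

end VanishingPoly

section Carlitz

variable {Fq}

local notation "K" => RatFunc Fq
local notation "ι" => algebraMap (Polynomial Fq) (RatFunc Fq)
local notation "θ" => algebraMap (Polynomial Fq) (RatFunc Fq) X
local notation "q" => Fintype.card Fq

omit [Fintype Fq] in
theorem polyOf_eq_degreeLTEquiv_symm {d : ℕ} (c : Fin d → Fq) :
    polyOf Fq c = ((degreeLTEquiv Fq d).symm c : Fq[X]) := by
  simp [polyOf, degreeLTEquiv, C_mul_X_pow_eq_monomial]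

omit [Fintype Fq] in
theorem degree_polyOf_lt {d : ℕ} (c : Fin d → Fq) : (polyOf Fq c).degree < d := by
  rw [polyOf_eq_degreeLTEquiv_symm]
  exact mem_degreeLT.1 ((degreeLTEquiv Fq d).symm c).2

theorem algebraMap_Dmonic_ne_zero (d : ℕ) : ι (Dmonic Fq d) ≠ 0 := by
  refine (map_ne_zero_iff _ (IsFractionRing.injective _ _)).2 (Monic.ne_zero ?_)
  refine monic_prod_of_monic _ _ fun c _ ↦ (monic_X_pow d).add_of_left ?_
  rw [degree_X_pow]
  exact degree_polyOf_lt c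

/-- `A(d) ⊂ K`, parametrized by coefficient vectors as in `polyOf`. -/
def carlitzEmbedding (d : ℕ) : (Fin d → Fq) →ₗ[Fq] K :=
  (IsScalarTower.toAlgHom Fq Fq[X] K).toLinearMap ∘ₗ (degreeLT Fq d).subtype ∘ₗ
    (degreeLTEquiv Fq d).symm.toLinearMap

omit [Fintype Fq] in
theorem carlitzEmbedding_apply {d : ℕ} (c : Fin d → Fq) :
    carlitzEmbedding d c = ι (polyOf Fq c) := by
  rw [polyOf_eq_degreeLTEquiv_symm]
  rfl

omit [Fintype Fq] in
theorem carlitzEmbedding_degreeLTEquiv {d : ℕ} (a : degreeLT Fq d) :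
    carlitzEmbedding d (degreeLTEquiv Fq d a) = ι a := by
  simp [carlitzEmbedding]

omit [Fintype Fq] in
theorem carlitzEmbedding_injective (d : ℕ) : Function.Injective (carlitzEmbedding (Fq := Fq) d) :=
  (IsFractionRing.injective Fq[X] K).comp <|
    Subtype.val_injective.comp (degreeLTEquiv Fq d).symm.injective

/-- `e_d(z) = ∏_{a ∈ A(d)} (z - a)`, so that `E_d = D_d⁻¹ e_d`. -/
def carlitzProd (d : ℕ) : K[X] :=
  vanishingPoly (carlitzEmbedding (Fq := Fq) d)

theorem eval_Ecar (d : ℕ) (u : K) :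
    (Ecar Fq d).eval u = (ι (Dmonic Fq d))⁻¹ * (carlitzProd d).eval u := by
  simp [Ecar, carlitzProd, vanishingPoly, carlitzEmbedding_apply]

theorem isMonicOfDegree_carlitzProd (d : ℕ) :
    IsMonicOfDegree (carlitzProd (Fq := Fq) d) (q ^ d) := by
  have := isMonicOfDegree_vanishingPoly (carlitzEmbedding (Fq := Fq) d)
  rwa [Fintype.card_fun, Fintype.card_fin] at this

theorem eval_carlitzProd_add (d : ℕ) (u v : K) :
    (carlitzProd d).eval (u + v) = (carlitzProd d).eval u + (carlitzProd d).eval v := by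
  have h := eval_vanishingPoly_add (carlitzEmbedding (Fq := Fq) d).toAddMonoidHom
    (carlitzEmbedding_injective d) u v
  rwa [LinearMap.toAddMonoidHom_coe] at h

theorem eval_carlitzProd_algebraMap_mul (d : ℕ) (c : Fq) (u : K) :
    (carlitzProd d).eval (algebraMap Fq K c * u) = algebraMap Fq K c * (carlitzProd d).eval u := by
  exact (eval_algebraMap_mul_vanishingPoly (carlitzEmbedding (Fq := Fq) d) c u :)

theorem eval_carlitzProd_algebraMap_of_degree_lt {d : ℕ} {a : Fq[X]} (ha : a.degree < d) :
    (carlitzProd d).eval (ι a) = 0 := by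
  have := eval_vanishingPoly_apply (carlitzEmbedding d)
    (degreeLTEquiv Fq d ⟨a, mem_degreeLT.2 ha⟩)
  rwa [carlitzEmbedding_degreeLTEquiv] at this

theorem algebraMap_Dmonic (d : ℕ) : ι (Dmonic Fq d) = (carlitzProd d).eval (θ ^ d) := by
  simp only [Dmonic, carlitzProd, vanishingPoly, map_prod, eval_prod, eval_sub, eval_X, eval_C]
  exact Fintype.prod_equiv (Equiv.neg _) _ _ fun c ↦ by
    rw [Equiv.neg_apply, map_neg, carlitzEmbedding_apply]
    simp

theorem eval_carlitzProd_algebraMap_of_degree_lt_succ {d : ℕ} {a : Fq[X]}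
    (ha : a.degree < (d + 1 : ℕ)) :
    (carlitzProd d).eval (ι a) = algebraMap Fq K (a.coeff d) * ι (Dmonic Fq d) := by
  have hlow : (a - C (a.coeff d) * X ^ d).degree < (d : WithBot ℕ) := by
    rw [degree_lt_iff_coeff_zero]
    intro m hm
    rcases hm.eq_or_lt with rfl | hm
    · simp
    · rw [coeff_sub, coeff_C_mul_X_pow, if_neg hm.ne',
        coeff_eq_zero_of_degree_lt (ha.trans_le (by exact_mod_cast hm)), sub_zero]
  calc (carlitzProd d).eval (ι a)
      = (carlitzProd d).eval
          (ι (a - C (a.coeff d) * X ^ d) + algebraMap Fq K (a.coeff d) * θ ^ d) := by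
        rw [IsScalarTower.algebraMap_apply Fq Fq[X] K, Polynomial.algebraMap_eq, ← map_pow,
          ← map_mul, ← map_add, sub_add_cancel]
    _ = algebraMap Fq K (a.coeff d) * ι (Dmonic Fq d) := by
        rw [eval_carlitzProd_add, eval_carlitzProd_algebraMap_of_degree_lt hlow, zero_add,
          eval_carlitzProd_algebraMap_mul, algebraMap_Dmonic]

theorem eval_carlitzProd_succ_theta_mul (d : ℕ) (u : K) :
    (carlitzProd (d + 1)).eval (θ * u) = θ ^ q ^ (d + 1) * (carlitzProd (d + 1)).eval u +
      ι (Dmonic Fq (d + 1)) / ι (Dmonic Fq d) * (carlitzProd d).eval u := by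
  -- The difference of the two sides has degree `< q ^ (d + 1)` and vanishes on `A(d + 1)`.
  have hQ : (carlitzProd (d + 1)).comp (C θ * X) - C (θ ^ q ^ (d + 1)) * carlitzProd (d + 1) -
      C (ι (Dmonic Fq (d + 1)) / ι (Dmonic Fq d)) * carlitzProd d = 0 := by
    refine eq_zero_of_natDegree_lt_card_of_eval_eq_zero _ (carlitzEmbedding_injective (d + 1))
      (fun c ↦ ?_) ?_
    · rw [carlitzEmbedding_apply]
      have hp := degree_polyOf_lt c
      set p := polyOf Fq c
      have hXp : (X * p).degree < ((d + 1 + 1 : ℕ) : WithBot ℕ) := by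
        rw [mul_comm, degree_mul_X, Nat.cast_succ (d + 1)]
        exact WithBot.add_lt_add_right (by simp) hp
      simp only [eval_sub, eval_mul, eval_comp, eval_C, eval_X]
      rw [← map_mul, eval_carlitzProd_algebraMap_of_degree_lt_succ hXp, coeff_X_mul,
        eval_carlitzProd_algebraMap_of_degree_lt hp,
        eval_carlitzProd_algebraMap_of_degree_lt_succ (d := d) hp]
      have hD := algebraMap_Dmonic_ne_zero (Fq := Fq) d
      field_simp
      ring
    · rw [Fintype.card_fun, Fintype.card_fin]
      refine (natDegree_sub_le _ _).trans_lt (max_lt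
        ((isMonicOfDegree_carlitzProd _).natDegree_comp_C_mul_X_sub_lt (by positivity) θ) ?_)
      refine (natDegree_C_mul_le _ _).trans_lt ?_
      rw [(isMonicOfDegree_carlitzProd d).natDegree_eq]
      exact Nat.pow_lt_pow_right Fintype.one_lt_card (lt_add_one d)
  have h := congrArg (eval u) hQ
  simp only [eval_sub, eval_mul, eval_comp, eval_C, eval_X, eval_zero] at h
  linear_combination h

theorem eval_Ecar_add (d : ℕ) (u v : K) :
    (Ecar Fq d).eval (u + v) = (Ecar Fq d).eval u + (Ecar Fq d).eval v := by
  rw [eval_Ecar, eval_Ecar, eval_Ecar, eval_carlitzProd_add, mul_add]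

theorem eval_Ecar_algebraMap_mul (d : ℕ) (c : Fq) (u : K) :
    (Ecar Fq d).eval (algebraMap Fq K c * u) = algebraMap Fq K c * (Ecar Fq d).eval u := by
  rw [eval_Ecar, eval_Ecar, eval_carlitzProd_algebraMap_mul, mul_left_comm]

theorem eval_Ecar_zero (u : K) : (Ecar Fq 0).eval u = u := by
  have hpoly (c : Fin 0 → Fq) : polyOf Fq c = 0 := by simp [polyOf]
  simp [Ecar, Dmonic, hpoly]

theorem eval_Ecar_theta_pow_of_lt {d i : ℕ} (h : i < d) : (Ecar Fq d).eval (θ ^ i) = 0 := by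
  rw [eval_Ecar, ← map_pow, eval_carlitzProd_algebraMap_of_degree_lt (by simpa using h), mul_zero]

theorem eval_Ecar_succ_theta_mul (d : ℕ) (u : K) :
    (Ecar Fq (d + 1)).eval (θ * u) =
      θ ^ q ^ (d + 1) * (Ecar Fq (d + 1)).eval u + (Ecar Fq d).eval u := by
  have hD := algebraMap_Dmonic_ne_zero (Fq := Fq) d
  have hD' := algebraMap_Dmonic_ne_zero (Fq := Fq) (d + 1)
  rw [eval_Ecar, eval_Ecar, eval_Ecar, eval_carlitzProd_succ_theta_mul]
  field_simp

theorem X_mul_bK (j : ℕ) : X * bK Fq j = bK Fq (j + 1) + C (θ ^ q ^ j) * bK Fq j := by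
  rw [bK, bK, Finset.prod_range_succ, map_pow]
  ring

def carlitzExpansion (d : ℕ) : K →ₗ[Fq] K[X] where
  toFun u := ∑ j ∈ Finset.range d, bK Fq j * C ((Ecar Fq j).eval u)
  map_add' u v := by simp only [eval_Ecar_add, C_add, mul_add, Finset.sum_add_distrib]
  map_smul' c u := by
    simp only [Algebra.smul_def, eval_Ecar_algebraMap_mul, C_mul, Finset.mul_sum,
      Polynomial.algebraMap_apply, RingHom.id_apply]
    exact Finset.sum_congr rfl fun j _ ↦ by ring

theorem carlitzExpansion_apply (d : ℕ) (u : K) :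
    carlitzExpansion d u = ∑ j ∈ Finset.range d, bK Fq j * C ((Ecar Fq j).eval u) := rfl

theorem carlitzExpansion_succ (d : ℕ) (u : K) :
    carlitzExpansion (d + 1) u = carlitzExpansion d u + bK Fq d * C ((Ecar Fq d).eval u) :=
  Finset.sum_range_succ _ d

theorem X_mul_carlitzExpansion_succ (d : ℕ) (u : K) :
    X * carlitzExpansion (d + 1) u =
      carlitzExpansion (d + 1) (θ * u) + bK Fq (d + 1) * C ((Ecar Fq d).eval u) := by
  induction d with
  | zero =>
    simp only [zero_add, carlitzExpansion_apply, Finset.sum_range_one, bK, Finset.prod_range_zero,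
      Finset.prod_range_one, eval_Ecar_zero, pow_zero, pow_one, C_mul]
    ring
  | succ d ih =>
    rw [carlitzExpansion_succ (d + 1), carlitzExpansion_succ (d + 1), mul_add, ih, ← mul_assoc,
      X_mul_bK, eval_Ecar_succ_theta_mul, C_add, C_mul]
    ring

theorem carlitzExpansion_theta_pow {d i : ℕ} (hi : i < d) : carlitzExpansion d (θ ^ i) = X ^ i := by
  obtain ⟨e, rfl⟩ : ∃ e, d = e + 1 := ⟨d - 1, by omega⟩
  induction i with
  | zero =>
    rw [carlitzExpansion_apply, Finset.sum_range_succ', Finset.sum_eq_zero fun j _ ↦ by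
      rw [eval_Ecar_theta_pow_of_lt j.succ_pos, map_zero, mul_zero]]
    simp [eval_Ecar_zero, bK]
  | succ i ih =>
    have h := X_mul_carlitzExpansion_succ e (θ ^ i)
    rw [ih (by omega), eval_Ecar_theta_pow_of_lt (by omega), map_zero, mul_zero, add_zero] at h
    rw [pow_succ', ← h, pow_succ']

end Carlitz

/-- For all `a ∈ A` of degree `< d`, `χ_t(a) = ∑_{j=0}^{d-1} b_j(t)·E_j(a)`
(an identity of polynomials in `t`). -/
theorem chi_eq_sum_b_E (d : ℕ) (a : Polynomial Fq) (ha : a.degree < (d : WithBot ℕ)) :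
    chiK Fq a =
      ∑ j ∈ Finset.range d,
        bK Fq j * Polynomial.C ((Ecar Fq j).eval (algebraMap (Polynomial Fq) (RatFunc Fq) a)) := by
  classical
  -- Both sides are `𝔽_q`-linear in `a`, and they agree on the monomials spanning `A(d)`.
  have hspan : a ∈ Submodule.span Fq ↑((Finset.range d).image fun i ↦ (X : Fq[X]) ^ i) :=
    degreeLT_eq_span_X_pow (R := Fq) ▸ mem_degreeLT.2 ha
  refine LinearMap.eqOn_span' (f := (mapAlg Fq (RatFunc Fq)).toLinearMap)
    (g := carlitzExpansion d ∘ₗ (IsScalarTower.toAlgHom Fq Fq[X] (RatFunc Fq)).toLinearMap)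
    (fun p hp ↦ ?_) hspan
  obtain ⟨i, hi, rfl⟩ := by simpa using hp
  change mapAlg Fq _ (X ^ i) = carlitzExpansion d (algebraMap Fq[X] (RatFunc Fq) (X ^ i))
  rw [map_pow, map_pow, carlitzExpansion_theta_pow hi, mapAlg_eq_map, map_X]
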